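/- arXiv:2210.16976 — 4 statements merged into one kernel-verified Lean document; each statement's English description precedes it below -/
import Mathlib

section
/- Let S and A be finite nonempty sets, let d, n ≥ 1 be integers and λ > 0, B > 0 reals. Let φ : S×A → ℝ^d satisfy ‖φ(s,a)‖₂ ≤ 1 for all (s,a), and let w : S → ℝ^d be such that P(s′|s,a) := ⟨φ(s,a), w(s′)⟩ is, for every (s,a), a probability distribution over s′ ∈ S, and such that ‖Σ_{s′∈S} w(s′)·l(s′)‖₂ ≤ √d for every function l : S → [0,1]. Let μ be a distribution on S×A, set Σ_μ := n·Σ_{(s,a)} μ(s,a)·φ(s,a)φ(s,a)ᵀ + λ·I_d, and define the distribution ν on S×A by ν(s,a) := (1/|A|)·Σ_{(s̃,ã)} μ(s̃,ã)·P(s|s̃,ã). Let q′ be any distribution on S×A, let π : S → Δ(A) be a policy, and define q(s,a) := Σ_{(s̃,ã)} q′(s̃,ã)·P(s|s̃,ã)·π(a|s). Then for every g : S×A → [0,B]: E_{(s,a)∼q}[g(s,a)] ≤ E_{(s̃,ã)∼q′}[ ‖φ(s̃,ã)‖_{Σ_μ^{-1}} ] · √( n·|A|·E_{(s,a)∼ν}[g(s,a)²]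 + B²·λ·d ). Moreover, for any distribution ξ on S and any policy π, setting ρ(s,a) := ξ(s)/|A|, one has E_{s∼ξ, a∼π(s)}[g(s,a)] ≤ √( |A|·E_{(s,a)∼ρ}[g(s,a)²] ). -/
open Finset Matrix

/-- Euclidean (ℓ²) norm of a finite-dimensional real vector. -/
noncomputable def l2norm {ι : Type*} [Fintype ι] (x : ι → ℝ) : ℝ :=
  Real.sqrt (∑ i, x i ^ 2)

/-- Matrix-weighted norm ‖x‖_M = √(xᵀ M x). -/
noncomputable def matNorm {ι : Type*} [Fintype ι] (M : Matrix ι ι ℝ) (x : ι → ℝ) : ℝ :=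
  Real.sqrt (x ⬝ᵥ M.mulVec x)

/-!
Put `h(s) = E_{a∼π(s)} g(s,a)` and `θ = Σ_s h(s) w(s)`. The low-rank structure gives
`E_q[g] = E_{q'}[⟨φ, θ⟩]`, and Cauchy–Schwarz in the geometry of `Σ_μ` bounds
`⟨φ, θ⟩ ≤ ‖φ‖_{Σ_μ⁻¹} ‖θ‖_{Σ_μ}`. In `‖θ‖²_{Σ_μ} = n E_μ[⟨φ, θ⟩²] + λ ‖θ‖²`, Jensen turns
`⟨φ(p), θ⟩² = (E_{s∼P(p)} h(s))²` into at most `E_{s∼P(p)} Σ_a g(s,a)²`, whose `μ`-average is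
`|A| E_ν[g²]`, while `‖θ‖ ≤ B √d` by the assumption on `w`. The second claim is Jensen again,
together with `π(a|s) ≤ 1`.
-/

lemma sq_sum_mul_le_sum_mul_sq {ι : Type*} [Fintype ι] {w : ι → ℝ} (hw0 : ∀ i, 0 ≤ w i)
    (hw1 : ∑ i, w i = 1) (f : ι → ℝ) : (∑ i, w i * f i) ^ 2 ≤ ∑ i, w i * f i ^ 2 := by
  simpa only [smul_eq_mul] using
    (even_two.convexOn_pow (𝕜 := ℝ)).map_sum_le (fun i _ => hw0 i) hw1
      (fun i _ => Set.mem_univ (f i))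

lemma sq_sum_mul_le_sum_sq {ι : Type*} [Fintype ι] {w : ι → ℝ} (hw0 : ∀ i, 0 ≤ w i)
    (hw1 : ∑ i, w i = 1) (f : ι → ℝ) : (∑ i, w i * f i) ^ 2 ≤ ∑ i, f i ^ 2 :=
  (sq_sum_mul_le_sum_mul_sq hw0 hw1 f).trans <| sum_le_sum fun i _ =>
    mul_le_of_le_one_left (sq_nonneg _) (hw1 ▸ single_le_sum (fun j _ => hw0 j) (mem_univ i))

lemma sum_mul_mem_Icc {ι : Type*} [Fintype ι] {w : ι → ℝ} (hw0 : ∀ i, 0 ≤ w i)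
    (hw1 : ∑ i, w i = 1) {f : ι → ℝ} {B : ℝ} (hf : ∀ i, f i ∈ Set.Icc 0 B) :
    ∑ i, w i * f i ∈ Set.Icc 0 B :=
  ⟨sum_nonneg fun i _ => mul_nonneg (hw0 i) (hf i).1,
    (sum_le_sum fun i _ => mul_le_mul_of_nonneg_left (hf i).2 (hw0 i)).trans_eq
      (by rw [← sum_mul, hw1, one_mul])⟩

lemma sq_sum_mul_sum_mul_le {S A : Type*} [Fintype S] [Fintype A] {ξ : S → ℝ}
    (hξ0 : ∀ s, 0 ≤ ξ s) (hξ1 : ∑ s, ξ s = 1) {pol : S → A → ℝ} (hpol0 : ∀ s a, 0 ≤ pol s a)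
    (hpol1 : ∀ s, ∑ a, pol s a = 1) (g : S × A → ℝ) :
    (∑ s, ξ s * ∑ a, pol s a * g (s, a)) ^ 2 ≤ ∑ s, ξ s * ∑ a, g (s, a) ^ 2 :=
  (sq_sum_mul_le_sum_mul_sq hξ0 hξ1 _).trans <| sum_le_sum fun s _ =>
    mul_le_mul_of_nonneg_left (sq_sum_mul_le_sum_sq (hpol0 s) (hpol1 s) _) (hξ0 s)

lemma sq_l2norm {ι : Type*} [Fintype ι] (x : ι → ℝ) : l2norm x ^ 2 = x ⬝ᵥ x := by
  rw [l2norm, Real.sq_sqrt (by positivity), dotProduct]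
  simp only [sq]

theorem Matrix.PosSemidef.dotProduct_mulVec_sq_le {ι : Type*} [Fintype ι] {M : Matrix ι ι ℝ}
    (hM : M.PosSemidef) (x y : ι → ℝ) :
    (x ⬝ᵥ M *ᵥ y) ^ 2 ≤ (x ⬝ᵥ M *ᵥ x) * (y ⬝ᵥ M *ᵥ y) := by
  let := M.toSeminormedAddCommGroup hM
  let := M.toInnerProductSpace hM
  have := real_inner_mul_inner_self_le x y
  change (M *ᵥ y) ⬝ᵥ star x * ((M *ᵥ y) ⬝ᵥ star x) ≤
    ((M *ᵥ x) ⬝ᵥ star x) * ((M *ᵥ y) ⬝ᵥ star y) at this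
  simpa only [star_trivial, dotProduct_comm _ x, dotProduct_comm _ y, sq] using this

theorem Matrix.PosDef.dotProduct_le_matNorm_inv_mul_matNorm {ι : Type*} [Fintype ι]
    [DecidableEq ι] {M : Matrix ι ι ℝ} (hM : M.PosDef) (v x : ι → ℝ) :
    v ⬝ᵥ x ≤ matNorm M⁻¹ v * matNorm M x := by
  have hMt : Mᵀ = M := by
    simpa only [conjTranspose_eq_transpose_of_trivial] using hM.isHermitian.eq
  have hMinv : M *ᵥ (M⁻¹ *ᵥ v) = v := by
    rw [mulVec_mulVec, mul_nonsing_inv _ (M.isUnit_iff_isUnit_det.mp hM.isUnit), one_mulVec]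
  have hsymm : ∀ y z, y ⬝ᵥ M *ᵥ z = (M *ᵥ y) ⬝ᵥ z := fun y z => by
    rw [dotProduct_mulVec, ← mulVec_transpose, hMt]
  have hcs := hM.posSemidef.dotProduct_mulVec_sq_le (M⁻¹ *ᵥ v) x
  rw [hsymm _ x, hsymm _ (M⁻¹ *ᵥ v), hMinv] at hcs
  calc v ⬝ᵥ x ≤ √((v ⬝ᵥ M⁻¹ *ᵥ v) * (x ⬝ᵥ M *ᵥ x)) :=
        (le_abs_self _).trans (Real.abs_le_sqrt hcs)
    _ = matNorm M⁻¹ v * matNorm M x :=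
        Real.sqrt_mul (hM.inv.posSemidef.dotProduct_mulVec_nonneg v) _

lemma sum_mul_dotProduct_le {κ ι : Type*} [Fintype κ] [Fintype ι] [DecidableEq ι]
    {M : Matrix ι ι ℝ} (hM : M.PosDef) {x : κ → ℝ} (hx : ∀ p, 0 ≤ x p) (φ : κ → ι → ℝ)
    {θ : ι → ℝ} {C : ℝ} (hθ : θ ⬝ᵥ M *ᵥ θ ≤ C) :
    ∑ p, x p * (φ p ⬝ᵥ θ) ≤ (∑ p, x p * matNorm M⁻¹ (φ p)) * √C :=
  calc ∑ p, x p * (φ p ⬝ᵥ θ) ≤ ∑ p, x p * (matNorm M⁻¹ (φ p) * matNorm M θ) :=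
        sum_le_sum fun p _ => mul_le_mul_of_nonneg_left
          (hM.dotProduct_le_matNorm_inv_mul_matNorm _ _) (hx p)
    _ = (∑ p, x p * matNorm M⁻¹ (φ p)) * matNorm M θ := by simp only [sum_mul, mul_assoc]
    _ ≤ (∑ p, x p * matNorm M⁻¹ (φ p)) * √C := mul_le_mul_of_nonneg_left (Real.sqrt_le_sqrt hθ)
        (sum_nonneg fun p _ => mul_nonneg (hx p) (Real.sqrt_nonneg _))

noncomputable def regularizedGram {κ ι : Type*} [Fintype κ] [DecidableEq ι] (φ : κ → ι → ℝ)
    (μ : κ → ℝ) (c lam : ℝ) : Matrix ι ι ℝ :=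
  c • (∑ p, μ p • vecMulVec (φ p) (φ p)) + lam • 1

lemma dotProduct_mulVec_regularizedGram {κ ι : Type*} [Fintype κ] [Fintype ι] [DecidableEq ι]
    (φ : κ → ι → ℝ) (μ : κ → ℝ) (c lam : ℝ) (x : ι → ℝ) :
    x ⬝ᵥ regularizedGram φ μ c lam *ᵥ x =
      c * ∑ p, μ p * (φ p ⬝ᵥ x) ^ 2 + lam * (x ⬝ᵥ x) := by
  simp only [regularizedGram, add_mulVec, smul_mulVec, sum_mulVec, vecMulVec_mulVec, one_mulVec,
    dotProduct_add, dotProduct_smul, dotProduct_sum, smul_eq_mul, MulOpposite.smul_eq_mul_unop,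
    MulOpposite.unop_op, mul_sum]
  congr 1
  refine sum_congr rfl fun p _ => ?_
  rw [dotProduct_comm x]
  ring

lemma posDef_regularizedGram {κ ι : Type*} [Fintype κ] [Fintype ι] [DecidableEq ι]
    (φ : κ → ι → ℝ) {μ : κ → ℝ} (hμ : ∀ p, 0 ≤ μ p) {c lam : ℝ} (hc : 0 ≤ c) (hlam : 0 < lam) :
    (regularizedGram φ μ c lam).PosDef :=
  PosDef.posSemidef_add
    ((posSemidef_sum _ fun p _ => (posSemidef_vecMulVec_self_star (φ p)).smul (hμ p)).smul hc)
    (PosDef.one.smul hlam)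

lemma natCast_card_mul_div_card {A : Type*} [Fintype A] (a : A) (x : ℝ) :
    (Fintype.card A : ℝ) * (x / Fintype.card A) = x :=
  have : Nonempty A := ⟨a⟩
  mul_div_cancel₀ x (Nat.cast_ne_zero.2 Fintype.card_ne_zero)

lemma sum_pushforward_mul {S A : Type*} [Fintype S] [Fintype A] (x : S × A → ℝ)
    (P : S × A → S → ℝ) (F : S × A → ℝ) :
    ∑ p : S × A, (∑ p', x p' * P p' p.1) * F p = ∑ p', x p' * ∑ s, P p' s * ∑ a, F (s, a) := by
  simp only [sum_mul, mul_sum]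
  rw [sum_comm]
  refine sum_congr rfl fun p' _ => ?_
  rw [Fintype.sum_prod_type]
  exact sum_congr rfl fun s _ => sum_congr rfl fun a _ => by ring

lemma card_mul_sum_mul_eq {S A : Type*} [Fintype S] [Fintype A] {μ ν : S × A → ℝ}
    {P : S × A → S → ℝ}
    (hν : ∀ p : S × A, ν p = (1 / (Fintype.card A : ℝ)) * ∑ p', μ p' * P p' p.1)
    (f : S × A → ℝ) :
    (Fintype.card A : ℝ) * ∑ p, ν p * f p = ∑ p', μ p' * ∑ s, P p' s * ∑ a, f (s, a) := by
  rw [← sum_pushforward_mul μ P, mul_sum]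
  refine sum_congr rfl fun p _ => ?_
  rw [hν, one_div_mul_eq_div, ← mul_assoc, natCast_card_mul_div_card p.2]

lemma sum_mul_eq_dotProduct_sum_smul {S ι : Type*} [Fintype S] [Fintype ι] {P : S → ℝ}
    {φ : ι → ℝ} {w : S → ι → ℝ} (hP : ∀ s, P s = ∑ j, φ j * w s j) (h : S → ℝ) :
    ∑ s, P s * h s = φ ⬝ᵥ ∑ s, h s • w s := by
  simp only [hP, dotProduct, Finset.sum_apply, Pi.smul_apply, smul_eq_mul, mul_sum, sum_mul]
  exact sum_comm.trans (sum_congr rfl fun _ _ => sum_congr rfl fun _ _ => by ring)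

lemma dotProduct_self_sum_smul_le {S ι : Type*} [Fintype S] [Fintype ι] {w : S → ι → ℝ}
    {r : ℝ} (hw : ∀ l : S → ℝ, (∀ s, l s ∈ Set.Icc (0 : ℝ) 1) →
      l2norm (fun j => ∑ s, w s j * l s) ≤ r)
    {B : ℝ} (hB : 0 < B) {h : S → ℝ} (hh : ∀ s, h s ∈ Set.Icc 0 B) :
    (∑ s, h s • w s) ⬝ᵥ (∑ s, h s • w s) ≤ (B * r) ^ 2 := by
  set v : ι → ℝ := fun j => ∑ s, w s j * (h s / B)
  have hv : l2norm v ≤ r := hw _ fun s =>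
    ⟨div_nonneg (hh s).1 hB.le, div_le_one_of_le₀ (hh s).2 hB.le⟩
  have hθ : ∑ s, h s • w s = B • v := by
    ext j
    simp only [v, Finset.sum_apply, Pi.smul_apply, smul_eq_mul, mul_sum]
    exact sum_congr rfl fun s _ => by field_simp
  calc (∑ s, h s • w s) ⬝ᵥ (∑ s, h s • w s) = B ^ 2 * l2norm v ^ 2 := by
        rw [hθ, sq_l2norm, dotProduct_smul, smul_dotProduct, smul_eq_mul, smul_eq_mul, sq,
          mul_assoc]
    _ ≤ (B * r) ^ 2 := by
        rw [mul_pow]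
        gcongr
        exact Real.sqrt_nonneg _

lemma sum_policy_mul_le_sqrt_card_mul {S A : Type*} [Fintype S] [Fintype A] {ξ : S → ℝ}
    (hξ0 : ∀ s, 0 ≤ ξ s) (hξ1 : ∑ s, ξ s = 1) {pol : S → A → ℝ} (hpol0 : ∀ s a, 0 ≤ pol s a)
    (hpol1 : ∀ s, ∑ a, pol s a = 1) (g : S × A → ℝ) :
    ∑ s, ∑ a, ξ s * pol s a * g (s, a) ≤
      √((Fintype.card A : ℝ) * ∑ p : S × A, (ξ p.1 / Fintype.card A) * g p ^ 2) := by
  have hrhs : (Fintype.card A : ℝ) * ∑ p : S × A, (ξ p.1 / Fintype.card A) * g p ^ 2 =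
      ∑ s, ξ s * ∑ a, g (s, a) ^ 2 := by
    simp only [mul_sum, Fintype.sum_prod_type]
    exact sum_congr rfl fun s _ => sum_congr rfl fun a _ => by
      rw [← mul_assoc, natCast_card_mul_div_card a]
  have hlhs : ∑ s, ∑ a, ξ s * pol s a * g (s, a) = ∑ s, ξ s * ∑ a, pol s a * g (s, a) := by
    simp only [mul_sum, mul_assoc]
  rw [hrhs, hlhs]
  exact (le_abs_self _).trans (Real.abs_le_sqrt (sq_sum_mul_sum_mul_le hξ0 hξ1 hpol0 hpol1 g))

theorem one_step_back_true_model_general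
    {S A : Type*} [Fintype S] [Fintype A]
    {d n : ℕ}
    {lam B : ℝ} (hlam : 0 < lam) (hB : 0 < B)
    (φ : S × A → Fin d → ℝ)
    (w : S → Fin d → ℝ)
    (P : S × A → S → ℝ) (hP : ∀ p s', P p s' = ∑ j, φ p j * w s' j)
    (hPpos : ∀ p s', 0 ≤ P p s') (hPsum : ∀ p, ∑ s', P p s' = 1)
    (hw : ∀ l : S → ℝ, (∀ s', l s' ∈ Set.Icc (0 : ℝ) 1) →
      l2norm (fun j => ∑ s', w s' j * l s') ≤ Real.sqrt d)
    (μ : S × A → ℝ) (hμpos : ∀ p, 0 ≤ μ p)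
    (Sig : Matrix (Fin d) (Fin d) ℝ)
    (hSig : Sig = (n : ℝ) • (∑ p, μ p • vecMulVec (φ p) (φ p)) +
      lam • (1 : Matrix (Fin d) (Fin d) ℝ))
    (ν : S × A → ℝ)
    (hν : ∀ p : S × A, ν p = (1 / (Fintype.card A : ℝ)) * ∑ p', μ p' * P p' p.1)
    (q' : S × A → ℝ) (hq'pos : ∀ p, 0 ≤ q' p)
    (pol : S → A → ℝ) (hpolpos : ∀ s a, 0 ≤ pol s a) (hpolsum : ∀ s, ∑ a, pol s a = 1)
    (q : S × A → ℝ)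
    (hq : ∀ p : S × A, q p = ∑ p', q' p' * P p' p.1 * pol p.1 p.2) :
    ∀ g : S × A → ℝ, (∀ p, g p ∈ Set.Icc (0 : ℝ) B) →
      ((∑ p, q p * g p) ≤
        (∑ p, q' p * matNorm Sig⁻¹ (φ p)) *
          Real.sqrt ((n : ℝ) * (Fintype.card A : ℝ) * (∑ p, ν p * g p ^ 2)
            + B ^ 2 * lam * d))
      ∧
      (∀ ξ : S → ℝ, (∀ s, 0 ≤ ξ s) → (∑ s, ξ s = 1) →
        ∀ pol' : S → A → ℝ, (∀ s a, 0 ≤ pol' s a) → (∀ s, ∑ a, pol' s a = 1) →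
          (∑ s, ∑ a, ξ s * pol' s a * g (s, a)) ≤
            Real.sqrt ((Fintype.card A : ℝ) *
              ∑ p : S × A, (ξ p.1 / (Fintype.card A : ℝ)) * g p ^ 2)) := by
  intro g hg
  refine ⟨?_, fun ξ hξ0 hξ1 pol' hpol'0 hpol'1 =>
    sum_policy_mul_le_sqrt_card_mul hξ0 hξ1 hpol'0 hpol'1 g⟩
  rw [← regularizedGram] at hSig
  subst hSig
  set h : S → ℝ := fun s => ∑ a, pol s a * g (s, a)
  set θ : Fin d → ℝ := ∑ s, h s • w s
  have hφθ (p : S × A) : φ p ⬝ᵥ θ = ∑ s, P p s * h s :=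
    (sum_mul_eq_dotProduct_sum_smul (hP p) h).symm
  have hθθ : θ ⬝ᵥ θ ≤ B ^ 2 * d := by
    simpa only [mul_pow, Real.sq_sqrt (Nat.cast_nonneg d)] using dotProduct_self_sum_smul_le hw hB
      fun s => sum_mul_mem_Icc (hpolpos s) (hpolsum s) fun a => hg (s, a)
  have hGθ : θ ⬝ᵥ regularizedGram φ μ n lam *ᵥ θ ≤
      n * (Fintype.card A : ℝ) * (∑ p, ν p * g p ^ 2) + B ^ 2 * lam * d := by
    calc _ = n * ∑ p, μ p * (φ p ⬝ᵥ θ) ^ 2 + lam * (θ ⬝ᵥ θ) :=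
          dotProduct_mulVec_regularizedGram φ μ n lam θ
      _ ≤ n * ∑ p, μ p * ∑ s, P p s * ∑ a, g (s, a) ^ 2 + lam * (B ^ 2 * d) := by
          gcongr with p
          exacts [hμpos p, hφθ p ▸ sq_sum_mul_sum_mul_le (hPpos p) (hPsum p) hpolpos hpolsum g]
      _ = _ := by rw [← card_mul_sum_mul_eq hν fun p => g p ^ 2]; ring
  calc ∑ p, q p * g p = ∑ p', q' p' * (φ p' ⬝ᵥ θ) := by
        simp only [hφθ, h, ← sum_pushforward_mul q' P fun p => pol p.1 p.2 * g p]
        refine sum_congr rfl fun p _ => ?_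
        rw [hq, ← sum_mul, mul_assoc]
    _ ≤ _ := sum_mul_dotProduct_le (posDef_regularizedGram φ hμpos n.cast_nonneg hlam) hq'pos φ hGθ

/-- One-step back inequality for the true low-rank transition model. -/
theorem one_step_back_true_model
    {S A : Type*} [Fintype S] [Nonempty S] [Fintype A] [Nonempty A]
    {d n : ℕ} (hd : 1 ≤ d) (hn : 1 ≤ n)
    {lam B : ℝ} (hlam : 0 < lam) (hB : 0 < B)
    (φ : S × A → Fin d → ℝ) (hφ : ∀ p, l2norm (φ p) ≤ 1)
    (w : S → Fin d → ℝ)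
    (P : S × A → S → ℝ) (hP : ∀ p s', P p s' = ∑ j, φ p j * w s' j)
    (hPpos : ∀ p s', 0 ≤ P p s') (hPsum : ∀ p, ∑ s', P p s' = 1)
    (hw : ∀ l : S → ℝ, (∀ s', l s' ∈ Set.Icc (0 : ℝ) 1) →
      l2norm (fun j => ∑ s', w s' j * l s') ≤ Real.sqrt d)
    (μ : S × A → ℝ) (hμpos : ∀ p, 0 ≤ μ p) (hμsum : ∑ p, μ p = 1)
    (Sig : Matrix (Fin d) (Fin d) ℝ)
    (hSig : Sig = (n : ℝ) • (∑ p, μ p • vecMulVec (φ p) (φ p)) +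
      lam • (1 : Matrix (Fin d) (Fin d) ℝ))
    (ν : S × A → ℝ)
    (hν : ∀ p : S × A, ν p = (1 / (Fintype.card A : ℝ)) * ∑ p', μ p' * P p' p.1)
    (q' : S × A → ℝ) (hq'pos : ∀ p, 0 ≤ q' p) (hq'sum : ∑ p, q' p = 1)
    (pol : S → A → ℝ) (hpolpos : ∀ s a, 0 ≤ pol s a) (hpolsum : ∀ s, ∑ a, pol s a = 1)
    (q : S × A → ℝ)
    (hq : ∀ p : S × A, q p = ∑ p', q' p' * P p' p.1 * pol p.1 p.2) :
    ∀ g : S × A → ℝ, (∀ p, g p ∈ Set.Icc (0 : ℝ) B) →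
      ((∑ p, q p * g p) ≤
        (∑ p, q' p * matNorm Sig⁻¹ (φ p)) *
          Real.sqrt ((n : ℝ) * (Fintype.card A : ℝ) * (∑ p, ν p * g p ^ 2)
            + B ^ 2 * lam * d))
      ∧
      (∀ ξ : S → ℝ, (∀ s, 0 ≤ ξ s) → (∑ s, ξ s = 1) →
        ∀ pol' : S → A → ℝ, (∀ s a, 0 ≤ pol' s a) → (∀ s, ∑ a, pol' s a = 1) →
          (∑ s, ∑ a, ξ s * pol' s a * g (s, a)) ≤
            Real.sqrt ((Fintype.card A : ℝ) *
              ∑ p : S × A, (ξ p.1 / (Fintype.card A : ℝ)) * g p ^ 2)) :=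
  one_step_back_true_model_general hlam hB φ w P hP hPpos hPsum hw μ hμpos Sig hSig ν hν q' hq'pos
    pol hpolpos hpolsum q hq
end

section
/- Let S and A be nonempty sets, let d, M, N ≥ 1 be integers, and let H ≥ 1, L ≥ 2, λ ≥ 1 be reals and 0 < ε̃ ≤ 1. Let Φ be a finite nonempty set of functions φ : S×A → ℝ^d each of whose values is a standard basis vector of ℝ^d, and let r_1,…,r_M : S×A → ℝ be fixed functions. Let C := { λ·I_d + Σ_{k=1}^{l} φ(s_k,a_k)φ(s_k,a_k)ᵀ : φ ∈ Φ, 1 ≤ l ≤ N, (s_1,a_1),…,(s_l,a_l) ∈ S×A } (every element of C is positive definite), and let F̃ := { (s,a) ↦ r_i(s,a) + φ(s,a)ᵀθ + min{ c·‖φ(s,a)‖_{Σ^{-1}}, H } : i ∈ {1,…,M}, φ ∈ Φ, θ ∈ ℝ^d with ‖θ‖₂ ≤ 2H²√d, c ∈ [0,L], Σ ∈ C }. Then there exists a finite set 𝒩 of functions S×A → ℝ with |𝒩| ≤ M·(12H²L²d/ε̃)^{3d}·|Φ| such that for every f ∈ F̃ there exists g ∈ 𝒩 with sup_{(s,a)∈S×A}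 |f(s,a) − g(s,a)| ≤ ε̃. -/
open Finset Matrix

lemma grid_cover (a b δ : ℝ) (hδ : 0 < δ) :
    ∃ G : Finset ℝ, G.card ≤ ⌈(b - a) / δ⌉₊ + 1 ∧
      ∀ x, a ≤ x → x ≤ b → ∃ y ∈ G, |x - y| ≤ δ := by
  refine ⟨(Finset.range (⌈(b - a) / δ⌉₊ + 1)).image (fun k : ℕ => a + δ * (k : ℝ)),
    (Finset.card_image_le).trans (by simp), ?_⟩
  intro x hax hxb
  set k := ⌊(x - a) / δ⌋₊ with hk
  have h0 : 0 ≤ (x - a) / δ := div_nonneg (by linarith) hδ.le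
  have hkle : (k : ℝ) ≤ (x - a) / δ := Nat.floor_le h0
  have hklt : (x - a) / δ < k + 1 := Nat.lt_floor_add_one _
  refine ⟨a + δ * k, Finset.mem_image.2 ⟨k, Finset.mem_range.2 ?_, rfl⟩, ?_⟩
  · have : k ≤ ⌈(b - a) / δ⌉₊ := by
      calc k ≤ ⌊(b - a) / δ⌋₊ := Nat.floor_le_floor (by gcongr <;> linarith)
        _ ≤ ⌈(b - a) / δ⌉₊ := Nat.floor_le_ceil _
    omega
  · have h1 : (k : ℝ) * δ ≤ x - a := (le_div_iff₀ hδ).1 hkle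
    have h2 : x - a < ((k : ℝ) + 1) * δ := (div_lt_iff₀ hδ).1 hklt
    rw [abs_le]
    constructor <;> nlinarith

set_option maxHeartbeats 2000000 in
/-- Covering-number bound for the class of optimistic Q-functions (Lemma `cov_num_orig`). -/
theorem covering_optimistic_Q_class
    {S A : Type*} [Nonempty S] [Nonempty A]
    {d M N : ℕ} (hd : 1 ≤ d) (hM : 1 ≤ M) (hN : 1 ≤ N)
    {H L lam epst : ℝ} (hH : 1 ≤ H) (hL : 2 ≤ L) (hlam : 1 ≤ lam)
    (hepst : 0 < epst) (hepst' : epst ≤ 1)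
    (Φ : Finset (S × A → Fin d → ℝ)) (hΦne : Φ.Nonempty)
    (hΦone : ∀ φ ∈ Φ, ∀ p, ∃ j, φ p = Pi.single j (1 : ℝ))
    (r : Fin M → S × A → ℝ)
    (C : Set (Matrix (Fin d) (Fin d) ℝ))
    (hC : C = {Sg | ∃ φ ∈ Φ, ∃ l : ℕ, 1 ≤ l ∧ l ≤ N ∧ ∃ pts : Fin l → S × A,
      Sg = lam • (1 : Matrix (Fin d) (Fin d) ℝ) +
        ∑ k, vecMulVec (φ (pts k)) (φ (pts k))})
    (Ftil : Set (S × A → ℝ))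
    (hFtil : Ftil = {f | ∃ i : Fin M, ∃ φ ∈ Φ, ∃ θ : Fin d → ℝ,
      l2norm θ ≤ 2 * H ^ 2 * Real.sqrt d ∧ ∃ c ∈ Set.Icc (0 : ℝ) L, ∃ Sg ∈ C,
      f = fun p => r i p + (∑ j, φ p j * θ j) + min (c * matNorm Sg⁻¹ (φ p)) H}) :
    ∃ 𝒩 : Finset (S × A → ℝ),
      (𝒩.card : ℝ) ≤ M * (12 * H ^ 2 * L ^ 2 * d / epst) ^ (3 * d) * Φ.card ∧
      ∀ f ∈ Ftil, ∃ g ∈ 𝒩, ∀ p : S × A, |f p - g p| ≤ epst := by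
  classical
  set K : ℝ := 12 * H ^ 2 * L ^ 2 * d / epst with hK
  have hd1 : (1 : ℝ) ≤ d := by exact_mod_cast hd
  have hsd : Real.sqrt d ≤ d := by
    have h1 : Real.sqrt d ^ 2 = d := Real.sq_sqrt (by positivity)
    have h2 : (1 : ℝ) ≤ Real.sqrt d := by
      nlinarith [Real.sqrt_nonneg (d : ℝ)]
    nlinarith
  have hsd0 : (0 : ℝ) ≤ Real.sqrt d := Real.sqrt_nonneg _
  have hδ : (0:ℝ) < epst / 2 := by positivity
  obtain ⟨G₁, hG₁card, hG₁⟩ :=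
    grid_cover (-(2 * H ^ 2 * Real.sqrt d)) (2 * H ^ 2 * Real.sqrt d) (epst / 2) hδ
  obtain ⟨G₂, hG₂card, hG₂⟩ := grid_cover 0 H (epst / 2) hδ
  have hL2 : (4 : ℝ) ≤ L ^ 2 := by nlinarith
  have hKbig : (48 : ℝ) * H ^ 2 * d / epst ≤ K := by
    rw [hK, div_le_div_iff₀ hepst hepst]
    nlinarith [mul_nonneg (sub_nonneg.2 hL2)
      (le_of_lt (show (0:ℝ) < 12 * H ^ 2 * (d:ℝ) * epst by positivity))]
  have hK1 : (1 : ℝ) ≤ K := by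
    refine le_trans ?_ hKbig
    rw [le_div_iff₀ hepst]; nlinarith
  have hn₁ : (G₁.card : ℝ) ≤ K := by
    refine le_trans ?_ hKbig
    have hval : (2 * H ^ 2 * Real.sqrt d - -(2 * H ^ 2 * Real.sqrt d)) / (epst / 2)
        = 8 * H ^ 2 * Real.sqrt d / epst := by
      field_simp; ring
    have hceil : (⌈8 * H ^ 2 * Real.sqrt d / epst⌉₊ : ℝ)
        < 8 * H ^ 2 * Real.sqrt d / epst + 1 :=
      Nat.ceil_lt_add_one (by positivity)
    rw [hval] at hG₁card
    have hc : (G₁.card : ℝ) ≤ (⌈8 * H ^ 2 * Real.sqrt d / epst⌉₊ : ℝ) + 1 := by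
      exact_mod_cast hG₁card
    have e1 : 8 * H ^ 2 * Real.sqrt d / epst ≤ 8 * H ^ 2 * (d:ℝ) / epst :=
      (div_le_div_iff_of_pos_right hepst).2 (by nlinarith)
    have e2 : (2 : ℝ) ≤ 40 * H ^ 2 * (d:ℝ) / epst := by
      rw [le_div_iff₀ hepst]; nlinarith
    have e3 : 8 * H ^ 2 * (d:ℝ) / epst + 40 * H ^ 2 * (d:ℝ) / epst
        = 48 * H ^ 2 * (d:ℝ) / epst := by ring
    linarith
  have hn₂ : (G₂.card : ℝ) ≤ K := by
    refine le_trans ?_ hKbig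
    have hval : (H - 0) / (epst / 2) = 2 * H / epst := by
      field_simp; ring
    have hceil : (⌈2 * H / epst⌉₊ : ℝ) < 2 * H / epst + 1 :=
      Nat.ceil_lt_add_one (by positivity)
    rw [hval] at hG₂card
    have hc : (G₂.card : ℝ) ≤ (⌈2 * H / epst⌉₊ : ℝ) + 1 := by
      exact_mod_cast hG₂card
    have e1 : 2 * H / epst ≤ 2 * H ^ 2 * (d:ℝ) / epst :=
      (div_le_div_iff_of_pos_right hepst).2 (by nlinarith)
    have e2 : (2 : ℝ) ≤ 46 * H ^ 2 * (d:ℝ) / epst := by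
      rw [le_div_iff₀ hepst]; nlinarith
    have e3 : 2 * H ^ 2 * (d:ℝ) / epst + 46 * H ^ 2 * (d:ℝ) / epst
        = 48 * H ^ 2 * (d:ℝ) / epst := by ring
    linarith
  set P₁ : Finset (Fin d → ℝ) := Fintype.piFinset (fun _ => G₁) with hP₁
  set P₂ : Finset (Fin d → ℝ) := Fintype.piFinset (fun _ => G₂) with hP₂
  set e : Fin M × (S × A → Fin d → ℝ) × (Fin d → ℝ) × (Fin d → ℝ) → (S × A → ℝ) :=
    fun q => fun p => r q.1 p + (∑ j, q.2.1 p j * q.2.2.1 j) + (∑ j, q.2.1 p j * q.2.2.2 j)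
    with he
  refine ⟨((Finset.univ ×ˢ (Φ ×ˢ (P₁ ×ˢ P₂)))).image e, ?_, ?_⟩
  · have hcard : (((Finset.univ ×ˢ (Φ ×ˢ (P₁ ×ˢ P₂)))).image e).card
        ≤ M * (Φ.card * (G₁.card ^ d * G₂.card ^ d)) := by
      refine Finset.card_image_le.trans ?_
      simp [Finset.card_product, hP₁, hP₂, Fintype.card_piFinset]
    have hcast : ((((Finset.univ ×ˢ (Φ ×ˢ (P₁ ×ˢ P₂)))).image e).card : ℝ)
        ≤ (M : ℝ) * ((Φ.card : ℝ) * ((G₁.card : ℝ) ^ d * (G₂.card : ℝ) ^ d)) := by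
      exact_mod_cast hcard
    refine hcast.trans ?_
    have h1 : (G₁.card : ℝ) ^ d ≤ K ^ d := pow_le_pow_left₀ (by positivity) hn₁ d
    have h2 : (G₂.card : ℝ) ^ d ≤ K ^ d := pow_le_pow_left₀ (by positivity) hn₂ d
    have h3 : (G₁.card : ℝ) ^ d * (G₂.card : ℝ) ^ d ≤ K ^ d * K ^ d := by
      exact mul_le_mul h1 h2 (by positivity) (by positivity)
    have h4 : K ^ d * K ^ d = K ^ (2 * d) := by rw [two_mul, pow_add]
    have h5 : K ^ (2 * d) ≤ K ^ (3 * d) := pow_le_pow_right₀ hK1 (by omega)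
    have hΦ0 : (0 : ℝ) ≤ Φ.card := by positivity
    have hM0 : (0 : ℝ) ≤ M := by positivity
    calc (M : ℝ) * ((Φ.card : ℝ) * ((G₁.card : ℝ) ^ d * (G₂.card : ℝ) ^ d))
        ≤ (M : ℝ) * ((Φ.card : ℝ) * K ^ (3 * d)) := by
          refine mul_le_mul_of_nonneg_left (mul_le_mul_of_nonneg_left ?_ hΦ0) hM0
          exact h3.trans (h4 ▸ h5)
      _ = (M : ℝ) * K ^ (3 * d) * (Φ.card : ℝ) := by ring
  · intro f hf
    rw [hFtil] at hf
    obtain ⟨i, φ, hφ, θ, hθ, c, hc, Sg, hSg, hfe⟩ := hf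
    -- coordinatewise bound on θ
    have hθj : ∀ j, -(2 * H ^ 2 * Real.sqrt d) ≤ θ j ∧ θ j ≤ 2 * H ^ 2 * Real.sqrt d := by
      intro j
      have h1 : θ j ^ 2 ≤ ∑ k, θ k ^ 2 :=
        Finset.single_le_sum (f := fun k => θ k ^ 2) (fun k _ => sq_nonneg _)
          (Finset.mem_univ j)
      have h2 : |θ j| ≤ l2norm θ := by
        rw [l2norm, ← Real.sqrt_sq_eq_abs]
        exact Real.sqrt_le_sqrt h1
      have := h2.trans hθ
      rw [abs_le] at this
      exact ⟨this.1, this.2⟩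
    set b : Fin d → ℝ := fun j => min (c * matNorm Sg⁻¹ (Pi.single j 1)) H with hb
    have hbj : ∀ j, 0 ≤ b j ∧ b j ≤ H := by
      intro j
      constructor
      · exact le_min (mul_nonneg hc.1 (Real.sqrt_nonneg _)) (by linarith)
      · exact min_le_right _ _
    have hθ' : ∀ j, ∃ y ∈ G₁, |θ j - y| ≤ epst / 2 := fun j => hG₁ _ (hθj j).1 (hθj j).2
    have hb' : ∀ j, ∃ y ∈ G₂, |b j - y| ≤ epst / 2 := fun j => hG₂ _ (hbj j).1 (hbj j).2
    choose θ' hθ'mem hθ'cl using hθ'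
    choose b' hb'mem hb'cl using hb'
    refine ⟨e (i, φ, θ', b'), Finset.mem_image.2 ⟨(i, φ, θ', b'), ?_, rfl⟩, ?_⟩
    · simp only [Finset.mem_product, Finset.mem_univ, true_and, hP₁, hP₂,
        Fintype.mem_piFinset]
      exact ⟨hφ, fun j => hθ'mem j, fun j => hb'mem j⟩
    · intro p
      obtain ⟨j, hj⟩ := hΦone φ hφ p
      have hsum : ∀ v : Fin d → ℝ, ∑ k, φ p k * v k = v j := by
        intro v
        rw [hj]
        simp [Pi.single_apply, ite_mul]
      have hfp : f p = r i p + θ j + b j := by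
        rw [hfe]
        simp only [hsum θ]
        rw [hb, hj]
      have hgp : e (i, φ, θ', b') p = r i p + θ' j + b' j := by
        simp only [he, hsum θ', hsum b']
      rw [hfp, hgp]
      have h1 := hθ'cl j
      have h2 := hb'cl j
      rw [abs_le] at h1 h2 ⊢
      constructor <;> linarith [h1.1, h1.2, h2.1, h2.2]
end

section
/- Let S be a nonempty set, M ≥ 1, and let A = A_1×⋯×A_M be a product of finite nonempty action sets. Let d ≥ 2 and N ≥ 1 be integers, H ≥ 1, L ≥ 2, λ ≥ 1 reals, and 0 < γ ≤ 1. Let Φ and Φ′ be finite nonempty sets of functions S×A → ℝ^d whose values are standard basis vectors of ℝ^d, let r_1,…,r_M : S×A → ℝ be fixed functions, let Π be a finite nonempty set of maps π : S → Δ(A), and let C := { λ·I_d + Σ_{k=1}^{l} φ(s_k,a_k)φ(s_k,a_k)ᵀ : φ ∈ Φ′, 1 ≤ l ≤ N, (s_k,a_k) ∈ S×A }. Define four classes of functions S → ℝ: F₁ := { s ↦ E_{a∼Unif(A)} |φ(s,a)ᵀθ − φ′(s,a)ᵀθ′| : φ,φ′ ∈ Φ, ‖θ‖₂ ≤ √d,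 ‖θ′‖₂ ≤ √d }; F₂ := { s ↦ E_{a∼π(s)}[ r_i(s,a)/H + φ(s,a)ᵀθ ] : i ∈ {1,…,M}, π ∈ Π, φ ∈ Φ′, ‖θ‖₂ ≤ √d }; F₃ := { s ↦ max_{μ∈Δ(A_i)} E_{a_i∼μ, a_{−i}∼π(s)_{−i}}[ r_i(s,a)/H + φ(s,a)ᵀθ ] : i ∈ {1,…,M}, π ∈ Π, φ ∈ Φ′, ‖θ‖₂ ≤ √d }, where π(s)_{−i} denotes the marginal of π(s) on Π_{j≠i}A_j and a_i, a_{−i} are drawn independently; F₄ := { s ↦ E_{a∼π(s)}[ min{ c·‖φ(s,a)‖_{Σ^{-1}}, H }/H² + φ(s,a)ᵀθ ] : c ∈ [0,L], π ∈ Π, Σ ∈ C, φ ∈ Φ′, ‖θ‖₂ ≤ √d }. Then there exists a finite set 𝒩 of functions S → ℝ with |𝒩| ≤ 4·M·|Π|·(6L²d/γ)^{3d}·max(|Φ|,|Φ′|)² such that every f ∈ F₁∪F₂∪F₃∪F₄ has g ∈ 𝒩 with sup_{s∈S} |f(s) − g(s)| ≤ γ. -/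
open Finset Matrix

/-- Combine player `i`'s action `b` with a profile `c` of the other players' actions
into a full joint action. -/
def patch {M : ℕ} {A : Fin M → Type*} (i : Fin M) (b : A i)
    (c : (j : {j : Fin M // j ≠ i}) → A j.1) : (j : Fin M) → A j :=
  fun j => if h : j = i then cast (congrArg A h).symm b else c ⟨j, h⟩

lemma coord_le_l2norm {ι : Type*} [Fintype ι] (x : ι → ℝ) (j : ι) : |x j| ≤ l2norm x := by
  rw [l2norm, ← Real.sqrt_sq_eq_abs]
  exact Real.sqrt_le_sqrt (Finset.single_le_sum (fun i _ => sq_nonneg (x i)) (mem_univ j))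

lemma single_dot {d : ℕ} {j₀ : Fin d} {v : Fin d → ℝ} (hv : v = Pi.single j₀ (1:ℝ))
    (θ : Fin d → ℝ) : ∑ j, v j * θ j = θ j₀ := by
  subst hv; simp [Pi.single_apply]

lemma weighted_abs_le {ι : Type*} [Fintype ι] {w x y : ι → ℝ} {ε : ℝ}
    (hw : ∀ a, 0 ≤ w a) (hw1 : ∑ a, w a = 1) (h : ∀ a, |x a - y a| ≤ ε) :
    |∑ a, w a * x a - ∑ a, w a * y a| ≤ ε := by
  rw [← Finset.sum_sub_distrib]
  calc |∑ a, (w a * x a - w a * y a)| ≤ ∑ a, |w a * x a - w a * y a| :=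
        Finset.abs_sum_le_sum_abs _ _
    _ = ∑ a, w a * |x a - y a| := by
        refine Finset.sum_congr rfl fun a _ => ?_
        rw [← mul_sub, abs_mul, abs_of_nonneg (hw a)]
    _ ≤ ∑ a, w a * ε := Finset.sum_le_sum fun a _ => mul_le_mul_of_nonneg_left (h a) (hw a)
    _ = ε := by rw [← Finset.sum_mul, hw1, one_mul]

lemma weighted_le_sup' {ι : Type*} [Fintype ι] [Nonempty ι] {w t : ι → ℝ}
    (hw : ∀ a, 0 ≤ w a) (hw1 : ∑ a, w a = 1) :
    ∑ a, w a * t a ≤ Finset.univ.sup' Finset.univ_nonempty t := by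
  calc ∑ a, w a * t a ≤ ∑ a, w a * Finset.univ.sup' Finset.univ_nonempty t :=
        Finset.sum_le_sum fun a _ => mul_le_mul_of_nonneg_left
          (Finset.le_sup' _ (mem_univ a)) (hw a)
    _ = _ := by rw [← Finset.sum_mul, hw1, one_mul]

lemma abs_csSup_sub {V W : Set ℝ} (hV : V.Nonempty) (hW : W.Nonempty)
    (hVb : BddAbove V) (hWb : BddAbove W) {ε : ℝ}
    (h1 : ∀ v ∈ V, ∃ w ∈ W, v ≤ w + ε) (h2 : ∀ w ∈ W, ∃ v ∈ V, w ≤ v + ε) :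
    |sSup V - sSup W| ≤ ε := by
  rw [abs_sub_le_iff]
  constructor
  · rw [sub_le_iff_le_add, add_comm]
    refine csSup_le hV fun v hv => ?_
    obtain ⟨w, hw, hvw⟩ := h1 v hv
    exact hvw.trans (by gcongr; exact le_csSup hWb hw)
  · rw [sub_le_iff_le_add, add_comm]
    refine csSup_le hW fun w hw => ?_
    obtain ⟨v, hv, hwv⟩ := h2 w hw
    exact hwv.trans (by gcongr; exact le_csSup hVb hv)

lemma round_err (c : ℝ) (hc : 0 < c) (x : ℝ) : |x - c * round (x / c)| ≤ c / 2 := by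
  have h := abs_sub_round (x / c)
  have hx : x - c * round (x / c) = c * (x / c - round (x / c)) := by field_simp
  rw [hx, abs_mul, abs_of_nonneg hc.le]
  calc c * |x / c - ↑(round (x / c))| ≤ c * (1/2) := by gcongr
    _ = c / 2 := by ring

lemma round_mem_Icc {c B : ℝ} (hc : 0 < c) {x : ℝ} (hx : |x| ≤ B) :
    round (x / c) ∈ Finset.Icc (-(⌈B / c⌉ + 1)) (⌈B / c⌉ + 1) := by
  have hy : |x / c| ≤ B / c := by
    rw [abs_div, abs_of_nonneg hc.le]; gcongr
  have h1 : (round (x / c) : ℝ) ≤ x / c + 1/2 := by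
    have := abs_sub_round (x / c)
    rw [abs_sub_le_iff] at this; linarith [this.2]
  have h2 : x / c - 1/2 ≤ (round (x / c) : ℝ) := by
    have := abs_sub_round (x / c)
    rw [abs_sub_le_iff] at this; linarith [this.1]
  have hB := Int.le_ceil (B / c)
  rw [Finset.mem_Icc]
  rw [abs_le] at hy
  constructor
  · have : (-(⌈B / c⌉ + 1) : ℝ) ≤ (round (x / c) : ℝ) := by push_cast; linarith
    exact_mod_cast this
  · have : (round (x / c) : ℝ) ≤ ((⌈B / c⌉ + 1 : ℤ) : ℝ) := by push_cast; linarith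
    exact_mod_cast this

lemma grid_card {c B : ℝ} (hc : 0 < c) (hB : 0 < B) :
    (((Finset.Icc (-(⌈B / c⌉ + 1)) (⌈B / c⌉ + 1)).image (fun k : ℤ => c * k)).card : ℝ)
      ≤ 2 * (B / c) + 5 := by
  set K : ℤ := ⌈B / c⌉ + 1 with hK
  have h1 : ((Finset.Icc (-K) K).image (fun k : ℤ => c * k)).card ≤ (Finset.Icc (-K) K).card :=
    Finset.card_image_le
  have h2 : (Finset.Icc (-K) K).card = (2 * K + 1).toNat := by
    rw [Int.card_Icc]; congr 1; omega
  have hK0 : (0:ℤ) ≤ ⌈B / c⌉ := Int.ceil_nonneg (by positivity)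
  have h3 : ((2 * K + 1).toNat : ℝ) = 2 * (K : ℝ) + 1 := by
    have h : ((2*K+1).toNat : ℤ) = 2*K+1 := Int.toNat_of_nonneg (by omega)
    exact_mod_cast congrArg (Int.cast : ℤ → ℝ) h
  have hKr : (K : ℝ) ≤ B / c + 2 := by
    have h := Int.ceil_lt_add_one (B / c)
    rw [hK]; push_cast; linarith
  calc (((Finset.Icc (-K) K).image (fun k : ℤ => c * k)).card : ℝ)
      ≤ ((2 * K + 1).toNat : ℝ) := by exact_mod_cast h1.trans h2.le
    _ = 2 * (K:ℝ) + 1 := h3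
    _ ≤ 2 * (B / c + 2) + 1 := by linarith
    _ = 2 * (B/c) + 5 := by ring

/-- Packaged grid: a finite γ/4-net for the interval [-B, B]. -/
lemma grid_pkg {γ B : ℝ} (hγ : 0 < γ) (hB : 0 < B) :
    ∃ (G : Finset ℝ) (q : ℝ → ℝ), G.Nonempty ∧ (∀ x, |x| ≤ B → q x ∈ G) ∧
      (∀ x, |x - q x| ≤ γ / 4) ∧ ((G.card : ℝ) ≤ 4 * B / γ + 5) := by
  have hc : (0:ℝ) < γ / 2 := by positivity
  refine ⟨(Finset.Icc (-(⌈B / (γ/2)⌉ + 1)) (⌈B / (γ/2)⌉ + 1)).image (fun k : ℤ => (γ/2) * k),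
    fun x => (γ/2) * round (x / (γ/2)), ?_, ?_, ?_, ?_⟩
  · refine ⟨(γ/2) * ((0:ℤ):ℝ), Finset.mem_image.mpr ⟨0, ?_, rfl⟩⟩
    have hK0 : (0:ℤ) ≤ ⌈B / (γ/2)⌉ := Int.ceil_nonneg (by positivity)
    rw [Finset.mem_Icc]; omega
  · exact fun x hx => Finset.mem_image.mpr ⟨round (x / (γ/2)), round_mem_Icc hc hx, rfl⟩
  · intro x
    have := round_err (γ/2) hc x
    linarith
  · have := grid_card (c := γ/2) (B := B) hc hB
    have h : 2 * (B / (γ/2)) = 4 * B / γ := by field_simp; ring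
    linarith

lemma patch_eq_symm {M : ℕ} {A : Fin M → Type*} (i : Fin M) (b : A i)
    (c : (j : {j : Fin M // j ≠ i}) → A j.1) :
    patch i b c = (Equiv.piSplitAt i A).symm (b, c) := by
  funext j
  simp only [patch, Equiv.piSplitAt, Equiv.coe_fn_symm_mk]
  by_cases h : j = i
  · subst h; rfl
  · simp [h]

lemma sum_patch {M : ℕ} {A : Fin M → Type*} [∀ j, Fintype (A j)]
    (i : Fin M) (F : ((j : Fin M) → A j) → ℝ) :
    ∑ b : A i, ∑ c : (j : {j : Fin M // j ≠ i}) → A j.1, F (patch i b c) = ∑ a, F a := by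
  have h : ∑ p : A i × ((j : {j : Fin M // j ≠ i}) → A j.1), F ((Equiv.piSplitAt i A).symm p)
      = ∑ a, F a :=
    Fintype.sum_equiv (Equiv.piSplitAt i A).symm _ _ (fun p => rfl)
  rw [Fintype.sum_prod_type] at h
  simp_rw [patch_eq_symm]
  exact h

lemma weighted_abs_le₂ {ι κ : Type*} [Fintype ι] [Fintype κ] {μ : ι → ℝ} {w : κ → ℝ}
    {x y : ι → κ → ℝ} {ε : ℝ}
    (hμ : ∀ b, 0 ≤ μ b) (hμ1 : ∑ b, μ b = 1) (hw : ∀ c, 0 ≤ w c) (hw1 : ∑ c, w c = 1)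
    (h : ∀ b c, |x b c - y b c| ≤ ε) :
    |(∑ b, ∑ c, μ b * w c * x b c) - (∑ b, ∑ c, μ b * w c * y b c)| ≤ ε := by
  have key := weighted_abs_le (ι := ι × κ) (w := fun p => μ p.1 * w p.2)
    (x := fun p => x p.1 p.2) (y := fun p => y p.1 p.2) (ε := ε)
    (fun p => mul_nonneg (hμ p.1) (hw p.2))
    (by rw [Fintype.sum_prod_type]; simp_rw [← Finset.mul_sum, hw1, mul_one]; exact hμ1)
    (fun p => h p.1 p.2)
  rw [Fintype.sum_prod_type, Fintype.sum_prod_type] at key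
  exact key

lemma weighted_le_sup'₂ {ι κ : Type*} [Fintype ι] [Fintype κ] [Nonempty ι] [Nonempty κ]
    {μ : ι → ℝ} {w : κ → ℝ} {t : ι → κ → ℝ}
    (hμ : ∀ b, 0 ≤ μ b) (hμ1 : ∑ b, μ b = 1) (hw : ∀ c, 0 ≤ w c) (hw1 : ∑ c, w c = 1) :
    (∑ b, ∑ c, μ b * w c * t b c) ≤
      Finset.univ.sup' Finset.univ_nonempty (fun p : ι × κ => t p.1 p.2) := by
  have key := weighted_le_sup' (ι := ι × κ) (w := fun p => μ p.1 * w p.2)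
    (t := fun p => t p.1 p.2)
    (fun p => mul_nonneg (hμ p.1) (hw p.2))
    (by rw [Fintype.sum_prod_type]; simp_rw [← Finset.mul_sum, hw1, mul_one]; exact hμ1)
  rw [Fintype.sum_prod_type] at key
  exact key

lemma F1_bound {ι : Type*} [Fintype ι] {X Y : ι → ℝ} {γ : ℝ} (hγ : 0 < γ)
    (h : ∀ a, |X a - Y a| ≤ γ / 2) :
    |(1 / (Fintype.card ι : ℝ)) * ∑ a, X a - (1 / (Fintype.card ι : ℝ)) * ∑ a, Y a| ≤ γ := by
  rcases isEmpty_or_nonempty ι with hι | hι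
  · simp only [Finset.univ_eq_empty, Finset.sum_empty, mul_zero, sub_zero, abs_zero]
    linarith
  · have hc : (0:ℝ) < (Fintype.card ι : ℝ) := by exact_mod_cast Fintype.card_pos
    rw [← mul_sub, ← Finset.sum_sub_distrib, abs_mul,
      abs_of_nonneg (by positivity : (0:ℝ) ≤ 1 / (Fintype.card ι : ℝ))]
    calc (1 / (Fintype.card ι:ℝ)) * |∑ a, (X a - Y a)|
        ≤ (1 / (Fintype.card ι:ℝ)) * ∑ a, |X a - Y a| :=
          mul_le_mul_of_nonneg_left (Finset.abs_sum_le_sum_abs _ _) (by positivity)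
      _ ≤ (1 / (Fintype.card ι:ℝ)) * ∑ _a : ι, (γ/2) :=
          mul_le_mul_of_nonneg_left (Finset.sum_le_sum fun a _ => h a) (by positivity)
      _ = (1 / (Fintype.card ι:ℝ)) * ((Fintype.card ι : ℝ) * (γ/2)) := by
          rw [Finset.sum_const, Finset.card_univ, nsmul_eq_mul]
      _ = γ/2 := by field_simp
      _ ≤ γ := by linarith

lemma sSup_net_bound {ι κ : Type*} [Fintype ι] [Fintype κ] [Nonempty ι] [Nonempty κ]
    (w : κ → ℝ) (hw0 : ∀ c, 0 ≤ w c) (hw1 : ∑ c, w c = 1)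
    (t t' : ι → κ → ℝ) {γ : ℝ} (hγ : 0 ≤ γ)
    (ht : ∀ b c, |t b c - t' b c| ≤ γ) :
    |sSup {v : ℝ | ∃ μ : ι → ℝ, (∀ b, 0 ≤ μ b) ∧ (∑ b, μ b = 1) ∧
        v = ∑ b, ∑ c, μ b * w c * t b c} -
      sSup {v : ℝ | ∃ μ : ι → ℝ, (∀ b, 0 ≤ μ b) ∧ (∑ b, μ b = 1) ∧
        v = ∑ b, ∑ c, μ b * w c * t' b c}| ≤ γ := by
  have hcard : (0:ℝ) < (Fintype.card ι : ℝ) := by exact_mod_cast Fintype.card_pos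
  have hμ0 : ∀ _b : ι, (0:ℝ) ≤ (Fintype.card ι : ℝ)⁻¹ := fun _ => by positivity
  have hμ1 : ∑ _b : ι, (Fintype.card ι : ℝ)⁻¹ = 1 := by
    rw [Finset.sum_const, Finset.card_univ, nsmul_eq_mul]
    field_simp
  apply abs_csSup_sub
  · exact ⟨_, _, hμ0, hμ1, rfl⟩
  · exact ⟨_, _, hμ0, hμ1, rfl⟩
  · refine ⟨Finset.univ.sup' Finset.univ_nonempty (fun p : ι × κ => t p.1 p.2), ?_⟩
    rintro v ⟨μ, h0, h1, rfl⟩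
    exact weighted_le_sup'₂ h0 h1 hw0 hw1
  · refine ⟨Finset.univ.sup' Finset.univ_nonempty (fun p : ι × κ => t' p.1 p.2), ?_⟩
    rintro v ⟨μ, h0, h1, rfl⟩
    exact weighted_le_sup'₂ h0 h1 hw0 hw1
  · rintro v ⟨μ, h0, h1, rfl⟩
    refine ⟨_, ⟨μ, h0, h1, rfl⟩, ?_⟩
    have h := abs_sub_le_iff.mp (weighted_abs_le₂ h0 h1 hw0 hw1 ht)
    linarith [h.1]
  · rintro v ⟨μ, h0, h1, rfl⟩
    refine ⟨_, ⟨μ, h0, h1, rfl⟩, ?_⟩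
    have h := abs_sub_le_iff.mp (weighted_abs_le₂ h0 h1 hw0 hw1 ht)
    linarith [h.2]
set_option maxHeartbeats 2000000 in
/-- Covering-number bound for the discriminator class F₁ ∪ F₂ ∪ F₃ ∪ F₄
used in model-free representation learning (Lemma `cov_num`). -/
theorem covering_discriminator_class
    {S : Type*} [Nonempty S] {M : ℕ} (hM : 1 ≤ M)
    (A : Fin M → Type*) [∀ j, Fintype (A j)] [∀ j, Nonempty (A j)]
    {d N : ℕ} (hd : 2 ≤ d) (hN : 1 ≤ N)
    {H L lam γ : ℝ} (hH : 1 ≤ H) (hL : 2 ≤ L) (hlam : 1 ≤ lam)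
    (hγ : 0 < γ) (hγ' : γ ≤ 1)
    (Φ Φ' : Finset ((S × ((j : Fin M) → A j)) → Fin d → ℝ))
    (hΦne : Φ.Nonempty) (hΦ'ne : Φ'.Nonempty)
    (hΦone : ∀ φ ∈ Φ, ∀ p, ∃ j, φ p = Pi.single j (1 : ℝ))
    (hΦ'one : ∀ φ ∈ Φ', ∀ p, ∃ j, φ p = Pi.single j (1 : ℝ))
    (r : Fin M → (S × ((j : Fin M) → A j)) → ℝ)
    (Pol : Finset (S → ((j : Fin M) → A j) → ℝ)) (hPolne : Pol.Nonempty)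
    (hPol : ∀ pol ∈ Pol, ∀ s, (∀ a, 0 ≤ pol s a) ∧ ∑ a, pol s a = 1)
    (C : Set (Matrix (Fin d) (Fin d) ℝ))
    (hC : C = {Sg | ∃ φ ∈ Φ', ∃ l : ℕ, 1 ≤ l ∧ l ≤ N ∧
      ∃ pts : Fin l → S × ((j : Fin M) → A j),
      Sg = lam • (1 : Matrix (Fin d) (Fin d) ℝ) +
        ∑ k, vecMulVec (φ (pts k)) (φ (pts k))})
    (F1 F2 F3 F4 : Set (S → ℝ))
    (hF1 : F1 = {f | ∃ φ ∈ Φ, ∃ φ' ∈ Φ, ∃ θ θ' : Fin d → ℝ,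
      l2norm θ ≤ Real.sqrt d ∧ l2norm θ' ≤ Real.sqrt d ∧
      f = fun s => (1 / (Fintype.card ((j : Fin M) → A j) : ℝ)) *
        ∑ a, |(∑ j, φ (s, a) j * θ j) - (∑ j, φ' (s, a) j * θ' j)|})
    (hF2 : F2 = {f | ∃ i : Fin M, ∃ pol ∈ Pol, ∃ φ ∈ Φ', ∃ θ : Fin d → ℝ,
      l2norm θ ≤ Real.sqrt d ∧
      f = fun s => ∑ a, pol s a * (r i (s, a) / H + ∑ j, φ (s, a) j * θ j)})
    (hF3 : F3 = {f | ∃ i : Fin M, ∃ pol ∈ Pol, ∃ φ ∈ Φ', ∃ θ : Fin d → ℝ,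
      l2norm θ ≤ Real.sqrt d ∧
      f = fun s => sSup {v : ℝ | ∃ μ : A i → ℝ,
        (∀ b, 0 ≤ μ b) ∧ (∑ b, μ b = 1) ∧
        v = ∑ b : A i, ∑ c : (j : {j : Fin M // j ≠ i}) → A j.1,
          μ b * (∑ b' : A i, pol s (patch i b' c)) *
            (r i (s, patch i b c) / H + ∑ j, φ (s, patch i b c) j * θ j)}})
    (hF4 : F4 = {f | ∃ c ∈ Set.Icc (0 : ℝ) L, ∃ pol ∈ Pol, ∃ Sg ∈ C, ∃ φ ∈ Φ',
      ∃ θ : Fin d → ℝ, l2norm θ ≤ Real.sqrt d ∧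
      f = fun s => ∑ a, pol s a *
        (min (c * matNorm Sg⁻¹ (φ (s, a))) H / H ^ 2 + ∑ j, φ (s, a) j * θ j)}) :
    ∃ 𝒩 : Finset (S → ℝ),
      (𝒩.card : ℝ) ≤ 4 * M * Pol.card * (6 * L ^ 2 * d / γ) ^ (3 * d) *
        ((max Φ.card Φ'.card : ℕ) : ℝ) ^ 2 ∧
      ∀ f ∈ F1 ∪ F2 ∪ F3 ∪ F4, ∃ g ∈ 𝒩, ∀ s : S, |f s - g s| ≤ γ := by
  classical
  have hdr : (2:ℝ) ≤ (d:ℝ) := by exact_mod_cast hd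
  have hB : (0:ℝ) < Real.sqrt d + 1 := by positivity
  obtain ⟨G, q, hGne, hqmem, hqerr, hGcard⟩ := grid_pkg (B := Real.sqrt d + 1) hγ hB
  set Gd : Finset (Fin d → ℝ) := Fintype.piFinset (fun _ => G) with hGddef
  have hqmemd : ∀ θ : Fin d → ℝ, l2norm θ ≤ Real.sqrt d → (fun j => q (θ j)) ∈ Gd := by
    intro θ hθ
    rw [hGddef, Fintype.mem_piFinset]
    intro j
    exact hqmem _ ((coord_le_l2norm θ j).trans (by linarith))
  set N1 : Finset (S → ℝ) := ((Φ ×ˢ Φ) ×ˢ (Gd ×ˢ Gd)).image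
    (fun p => fun s => (1 / (Fintype.card ((j : Fin M) → A j) : ℝ)) *
      ∑ a, |(∑ j, p.1.1 (s, a) j * p.2.1 j) - (∑ j, p.1.2 (s, a) j * p.2.2 j)|) with hN1
  set N2 : Finset (S → ℝ) := ((Finset.univ : Finset (Fin M)) ×ˢ Pol ×ˢ Φ' ×ˢ Gd).image
    (fun p => fun s => ∑ a, p.2.1 s a *
      (r p.1 (s, a) / H + ∑ j, p.2.2.1 (s, a) j * p.2.2.2 j)) with hN2
  set N3 : Finset (S → ℝ) := ((Finset.univ : Finset (Fin M)) ×ˢ Pol ×ˢ Φ' ×ˢ Gd).image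
    (fun p => fun s => sSup {v : ℝ | ∃ μ : A p.1 → ℝ,
      (∀ b, 0 ≤ μ b) ∧ (∑ b, μ b = 1) ∧
      v = ∑ b : A p.1, ∑ c : (j : {j : Fin M // j ≠ p.1}) → A j.1,
        μ b * (∑ b' : A p.1, p.2.1 s (patch p.1 b' c)) *
          (r p.1 (s, patch p.1 b c) / H + ∑ j, p.2.2.1 (s, patch p.1 b c) j * p.2.2.2 j)})
    with hN3
  set N4 : Finset (S → ℝ) := (Pol ×ˢ Φ' ×ˢ Gd).image
    (fun p => fun s => ∑ a, p.1 s a * (∑ j, p.2.1 (s, a) j * p.2.2 j)) with hN4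
  refine ⟨N1 ∪ N2 ∪ N3 ∪ N4, ?_, ?_⟩
  · -- cardinality bound
    have hMR : (1:ℝ) ≤ (M:ℝ) := by exact_mod_cast hM
    have hPR : (1:ℝ) ≤ (Pol.card:ℝ) := by
      exact_mod_cast Finset.card_pos.mpr hPolne
    have hΦR : (Φ.card:ℝ) ≤ ((max Φ.card Φ'.card : ℕ):ℝ) := by
      exact_mod_cast le_max_left _ _
    have hΦ'R : (Φ'.card:ℝ) ≤ ((max Φ.card Φ'.card : ℕ):ℝ) := by
      exact_mod_cast le_max_right _ _
    have hmx1 : (1:ℝ) ≤ ((max Φ.card Φ'.card : ℕ):ℝ) := by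
      have h := Finset.card_pos.mpr hΦne
      exact_mod_cast le_trans h (le_max_left _ _)
    have hg1 : (1:ℝ) ≤ (G.card:ℝ) := by exact_mod_cast Finset.card_pos.mpr hGne
    have hgd1 : (1:ℝ) ≤ (G.card:ℝ)^d := one_le_pow₀ hg1
    have hgdd : (G.card:ℝ)^d ≤ (G.card:ℝ)^d * (G.card:ℝ)^d := by nlinarith
    have hgdcast : (Gd.card : ℝ) = (G.card:ℝ)^d := by
      rw [hGddef, Fintype.card_piFinset]
      push_cast
      simp [Finset.prod_const]
    have hsd : Real.sqrt (d:ℝ) ≤ (d:ℝ) := by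
      nlinarith [Real.sq_sqrt (show (0:ℝ) ≤ (d:ℝ) by positivity),
        Real.sqrt_nonneg (d:ℝ)]
    have hL4 : (4:ℝ) ≤ L^2 := by nlinarith
    have hgZ : (G.card : ℝ) ≤ 6 * L^2 * d / γ := by
      rw [le_div_iff₀ hγ]
      have h1 : (G.card : ℝ) * γ ≤ (4 * (Real.sqrt d + 1) / γ + 5) * γ :=
        mul_le_mul_of_nonneg_right hGcard hγ.le
      have h2 : (4 * (Real.sqrt d + 1) / γ + 5) * γ = 4 * (Real.sqrt d + 1) + 5 * γ := by
        field_simp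
      have h3 : (24:ℝ) * d ≤ 6 * L^2 * d := by nlinarith
      have h4 : 4 * (Real.sqrt d + 1) + 5 * γ ≤ 24 * d := by
        have := Real.sqrt_nonneg (d:ℝ); linarith
      linarith
    have hZ1 : (1:ℝ) ≤ 6 * L^2 * d / γ := le_trans hg1 hgZ
    have hpow : (G.card:ℝ)^(2*d) ≤ (6 * L^2 * d / γ)^(3*d) :=
      calc (G.card:ℝ)^(2*d) ≤ (6 * L^2 * d / γ)^(2*d) :=
            pow_le_pow_left₀ (by positivity) hgZ _
        _ ≤ (6 * L^2 * d / γ)^(3*d) := pow_le_pow_right₀ hZ1 (by omega)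
    have hb1 : ((Φ'.card:ℝ)) * (G.card:ℝ)^d ≤
        ((max Φ.card Φ'.card : ℕ):ℝ)^2 * ((G.card:ℝ)^d)^2 := by
      calc (Φ'.card:ℝ) * (G.card:ℝ)^d
          ≤ ((max Φ.card Φ'.card : ℕ):ℝ) * ((G.card:ℝ)^d * (G.card:ℝ)^d) :=
            mul_le_mul hΦ'R hgdd (by positivity) (by positivity)
        _ ≤ (((max Φ.card Φ'.card : ℕ):ℝ) * ((max Φ.card Φ'.card : ℕ):ℝ)) *
            ((G.card:ℝ)^d * (G.card:ℝ)^d) :=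
            mul_le_mul_of_nonneg_right
              (le_mul_of_one_le_left (by positivity) hmx1) (by positivity)
        _ = ((max Φ.card Φ'.card : ℕ):ℝ)^2 * ((G.card:ℝ)^d)^2 := by ring
    have hQ4 : ∀ x : ℝ,
        (x = (Φ.card:ℝ) * Φ.card * ((G.card:ℝ)^d * (G.card:ℝ)^d) ∨
         x = (M:ℝ) * ((Pol.card:ℝ) * ((Φ'.card:ℝ) * (G.card:ℝ)^d)) ∨
         x = (Pol.card:ℝ) * ((Φ'.card:ℝ) * (G.card:ℝ)^d)) →
        x ≤ (M:ℝ) * Pol.card * ((max Φ.card Φ'.card : ℕ):ℝ)^2 * ((G.card:ℝ)^d)^2 := by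
      intro x hx
      have hMP1 : (1:ℝ) ≤ (M:ℝ) * Pol.card := by nlinarith
      rcases hx with h | h | h
      · subst h
        calc (Φ.card:ℝ) * Φ.card * ((G.card:ℝ)^d * (G.card:ℝ)^d)
            ≤ (((max Φ.card Φ'.card : ℕ):ℝ) * ((max Φ.card Φ'.card : ℕ):ℝ)) *
              ((G.card:ℝ)^d * (G.card:ℝ)^d) :=
              mul_le_mul_of_nonneg_right
                (mul_le_mul hΦR hΦR (by positivity) (by positivity)) (by positivity)
          _ ≤ ((M:ℝ) * Pol.card) * ((((max Φ.card Φ'.card : ℕ):ℝ) *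
              ((max Φ.card Φ'.card : ℕ):ℝ)) * ((G.card:ℝ)^d * (G.card:ℝ)^d)) :=
              le_mul_of_one_le_left (by positivity) hMP1
          _ = (M:ℝ) * Pol.card * ((max Φ.card Φ'.card : ℕ):ℝ)^2 * ((G.card:ℝ)^d)^2 := by
              ring
      · subst h
        calc (M:ℝ) * ((Pol.card:ℝ) * ((Φ'.card:ℝ) * (G.card:ℝ)^d))
            ≤ (M:ℝ) * ((Pol.card:ℝ) *
              (((max Φ.card Φ'.card : ℕ):ℝ)^2 * ((G.card:ℝ)^d)^2)) := by
              refine mul_le_mul_of_nonneg_left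
                (mul_le_mul_of_nonneg_left hb1 (by positivity)) (by positivity)
          _ = (M:ℝ) * Pol.card * ((max Φ.card Φ'.card : ℕ):ℝ)^2 * ((G.card:ℝ)^d)^2 := by
              ring
      · subst h
        calc (Pol.card:ℝ) * ((Φ'.card:ℝ) * (G.card:ℝ)^d)
            ≤ (Pol.card:ℝ) * (((max Φ.card Φ'.card : ℕ):ℝ)^2 * ((G.card:ℝ)^d)^2) :=
              mul_le_mul_of_nonneg_left hb1 (by positivity)
          _ ≤ (M:ℝ) * ((Pol.card:ℝ) *
              (((max Φ.card Φ'.card : ℕ):ℝ)^2 * ((G.card:ℝ)^d)^2)) :=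
              le_mul_of_one_le_left (by positivity) hMR
          _ = (M:ℝ) * Pol.card * ((max Φ.card Φ'.card : ℕ):ℝ)^2 * ((G.card:ℝ)^d)^2 := by
              ring
    have hc1 : (N1.card : ℝ) ≤
        (M:ℝ) * Pol.card * ((max Φ.card Φ'.card : ℕ):ℝ)^2 * ((G.card:ℝ)^d)^2 := by
      refine le_trans ?_ (hQ4 _ (Or.inl rfl))
      calc (N1.card : ℝ) ≤ (((Φ ×ˢ Φ) ×ˢ (Gd ×ˢ Gd)).card : ℝ) := by
            exact_mod_cast Finset.card_image_le
        _ = (Φ.card:ℝ) * Φ.card * ((G.card:ℝ)^d * (G.card:ℝ)^d) := by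
            rw [Finset.card_product, Finset.card_product, Finset.card_product]
            push_cast
            rw [hgdcast]
    have hc2 : (N2.card : ℝ) ≤
        (M:ℝ) * Pol.card * ((max Φ.card Φ'.card : ℕ):ℝ)^2 * ((G.card:ℝ)^d)^2 := by
      refine le_trans ?_ (hQ4 _ (Or.inr (Or.inl rfl)))
      calc (N2.card : ℝ)
          ≤ ((((Finset.univ : Finset (Fin M)) ×ˢ Pol ×ˢ Φ' ×ˢ Gd)).card : ℝ) := by
            exact_mod_cast Finset.card_image_le
        _ = (M:ℝ) * ((Pol.card:ℝ) * ((Φ'.card:ℝ) * (G.card:ℝ)^d)) := by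
            rw [Finset.card_product, Finset.card_product, Finset.card_product,
              Finset.card_univ, Fintype.card_fin]
            push_cast
            rw [hgdcast]
    have hc3 : (N3.card : ℝ) ≤
        (M:ℝ) * Pol.card * ((max Φ.card Φ'.card : ℕ):ℝ)^2 * ((G.card:ℝ)^d)^2 := by
      refine le_trans ?_ (hQ4 _ (Or.inr (Or.inl rfl)))
      calc (N3.card : ℝ)
          ≤ ((((Finset.univ : Finset (Fin M)) ×ˢ Pol ×ˢ Φ' ×ˢ Gd)).card : ℝ) := by
            exact_mod_cast Finset.card_image_le
        _ = (M:ℝ) * ((Pol.card:ℝ) * ((Φ'.card:ℝ) * (G.card:ℝ)^d)) := by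
            rw [Finset.card_product, Finset.card_product, Finset.card_product,
              Finset.card_univ, Fintype.card_fin]
            push_cast
            rw [hgdcast]
    have hc4 : (N4.card : ℝ) ≤
        (M:ℝ) * Pol.card * ((max Φ.card Φ'.card : ℕ):ℝ)^2 * ((G.card:ℝ)^d)^2 := by
      refine le_trans ?_ (hQ4 _ (Or.inr (Or.inr rfl)))
      calc (N4.card : ℝ) ≤ (((Pol ×ˢ Φ' ×ˢ Gd)).card : ℝ) := by
            exact_mod_cast Finset.card_image_le
        _ = (Pol.card:ℝ) * ((Φ'.card:ℝ) * (G.card:ℝ)^d) := by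
            rw [Finset.card_product, Finset.card_product]
            push_cast
            rw [hgdcast]
    have htot : ((N1 ∪ N2 ∪ N3 ∪ N4).card : ℝ) ≤
        4 * ((M:ℝ) * Pol.card * ((max Φ.card Φ'.card : ℕ):ℝ)^2 * ((G.card:ℝ)^d)^2) := by
      have h3 := Finset.card_union_le N1 N2
      have h2 := Finset.card_union_le (N1 ∪ N2) N3
      have h := Finset.card_union_le (N1 ∪ N2 ∪ N3) N4
      have hN : ((N1 ∪ N2 ∪ N3 ∪ N4).card : ℝ) ≤
          (N1.card : ℝ) + N2.card + N3.card + N4.card := by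
        have := le_trans h (Nat.add_le_add_right (le_trans h2 (Nat.add_le_add_right h3 _)) _)
        exact_mod_cast this
      linarith
    refine htot.trans ?_
    have hgd2 : ((G.card:ℝ)^d)^2 = (G.card:ℝ)^(2*d) := by rw [← pow_mul, Nat.mul_comm]
    have step1 : 4 * ((M:ℝ) * Pol.card * ((max Φ.card Φ'.card : ℕ):ℝ)^2 * ((G.card:ℝ)^d)^2)
        = 4 * (M:ℝ) * Pol.card * (G.card:ℝ)^(2*d) * ((max Φ.card Φ'.card : ℕ):ℝ)^2 := by
      rw [hgd2]; ring
    rw [step1]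
    refine mul_le_mul_of_nonneg_right ?_ (by positivity)
    exact mul_le_mul_of_nonneg_left hpow (by positivity)
  · -- covering property
    intro f hf
    have hmem4 : ∀ {g : S → ℝ}, g ∈ N1 ∨ g ∈ N2 ∨ g ∈ N3 ∨ g ∈ N4 →
        g ∈ N1 ∪ N2 ∪ N3 ∪ N4 := by
      intro g hg
      simp only [Finset.mem_union]
      tauto
    rcases hf with ((hf | hf) | hf) | hf
    · -- F1
      rw [hF1] at hf
      obtain ⟨φ, hφ, φ', hφ', θ, θ', hθ, hθ', rfl⟩ := hf
      refine ⟨_, hmem4 (Or.inl (Finset.mem_image.mpr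
        ⟨((φ, φ'), (fun j => q (θ j), fun j => q (θ' j))),
         Finset.mem_product.mpr ⟨Finset.mem_product.mpr ⟨hφ, hφ'⟩,
           Finset.mem_product.mpr ⟨hqmemd θ hθ, hqmemd θ' hθ'⟩⟩, rfl⟩)), ?_⟩
      intro s
      refine F1_bound hγ ?_
      intro a
      obtain ⟨j₁, hj₁⟩ := hΦone φ hφ (s, a)
      obtain ⟨j₂, hj₂⟩ := hΦone φ' hφ' (s, a)
      show abs (|(∑ j, φ (s, a) j * θ j) - (∑ j, φ' (s, a) j * θ' j)| -
        |(∑ j, φ (s, a) j * q (θ j)) - (∑ j, φ' (s, a) j * q (θ' j))|) ≤ γ / 2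
      rw [single_dot hj₁ θ, single_dot hj₂ θ', single_dot hj₁ (fun j => q (θ j)),
        single_dot hj₂ (fun j => q (θ' j))]
      have e1 := hqerr (θ j₁)
      have e2 := hqerr (θ' j₂)
      calc abs (|θ j₁ - θ' j₂| - |q (θ j₁) - q (θ' j₂)|)
          ≤ |(θ j₁ - θ' j₂) - (q (θ j₁) - q (θ' j₂))| := abs_abs_sub_abs_le_abs_sub _ _
        _ ≤ γ / 2 := by
            rw [abs_le] at e1 e2 ⊢
            exact ⟨by linarith [e1.1, e2.2], by linarith [e1.2, e2.1]⟩
    · -- F2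
      rw [hF2] at hf
      obtain ⟨i, pol, hpol, φ, hφ, θ, hθ, rfl⟩ := hf
      refine ⟨_, hmem4 (Or.inr (Or.inl (Finset.mem_image.mpr
        ⟨(i, pol, φ, fun j => q (θ j)),
         Finset.mem_product.mpr ⟨Finset.mem_univ _, Finset.mem_product.mpr ⟨hpol,
           Finset.mem_product.mpr ⟨hφ, hqmemd θ hθ⟩⟩⟩, rfl⟩))), ?_⟩
      intro s
      refine weighted_abs_le (hPol pol hpol s).1 (hPol pol hpol s).2 ?_
      intro a
      obtain ⟨j₀, hj₀⟩ := hΦ'one φ hφ (s, a)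
      show |(r i (s, a) / H + ∑ j, φ (s, a) j * θ j) -
        (r i (s, a) / H + ∑ j, φ (s, a) j * q (θ j))| ≤ γ
      rw [single_dot hj₀ θ, single_dot hj₀ (fun j => q (θ j)), add_sub_add_left_eq_sub]
      have := hqerr (θ j₀)
      linarith
    · -- F3
      rw [hF3] at hf
      obtain ⟨i, pol, hpol, φ, hφ, θ, hθ, rfl⟩ := hf
      refine ⟨_, hmem4 (Or.inr (Or.inr (Or.inl (Finset.mem_image.mpr
        ⟨(i, pol, φ, fun j => q (θ j)),
         Finset.mem_product.mpr ⟨Finset.mem_univ _, Finset.mem_product.mpr ⟨hpol,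
           Finset.mem_product.mpr ⟨hφ, hqmemd θ hθ⟩⟩⟩, rfl⟩)))), ?_⟩
      intro s
      have hw0 : ∀ c : (j : {j : Fin M // j ≠ i}) → A j.1,
          0 ≤ ∑ b' : A i, pol s (patch i b' c) :=
        fun c => Finset.sum_nonneg fun b' _ => (hPol pol hpol s).1 _
      have hw1 : ∑ c : (j : {j : Fin M // j ≠ i}) → A j.1,
          ∑ b' : A i, pol s (patch i b' c) = 1 := by
        rw [Finset.sum_comm, sum_patch i (fun a => pol s a)]
        exact (hPol pol hpol s).2
      refine sSup_net_bound _ hw0 hw1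
        (fun b c => r i (s, patch i b c) / H + ∑ j, φ (s, patch i b c) j * θ j)
        (fun b c => r i (s, patch i b c) / H + ∑ j, φ (s, patch i b c) j * q (θ j))
        hγ.le ?_
      intro b c
      obtain ⟨j₀, hj₀⟩ := hΦ'one φ hφ (s, patch i b c)
      show |(r i (s, patch i b c) / H + ∑ j, φ (s, patch i b c) j * θ j) -
        (r i (s, patch i b c) / H + ∑ j, φ (s, patch i b c) j * q (θ j))| ≤ γ
      rw [single_dot hj₀ θ, single_dot hj₀ (fun j => q (θ j)), add_sub_add_left_eq_sub]
      have := hqerr (θ j₀)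
      linarith
    · -- F4
      rw [hF4] at hf
      obtain ⟨c, hc01, pol, hpol, Sg, hSg, φ, hφ, θ, hθ, rfl⟩ := hf
      have hψB : ∀ j : Fin d,
          |min (c * matNorm Sg⁻¹ (Pi.single j (1:ℝ))) H / H ^ 2 + θ j|
            ≤ Real.sqrt d + 1 := by
        intro j
        have hm0 : 0 ≤ matNorm Sg⁻¹ (Pi.single j (1:ℝ)) := Real.sqrt_nonneg _
        have h0 : 0 ≤ min (c * matNorm Sg⁻¹ (Pi.single j (1:ℝ))) H :=
          le_min (mul_nonneg hc01.1 hm0) (by linarith)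
        have h1 : min (c * matNorm Sg⁻¹ (Pi.single j (1:ℝ))) H / H ^ 2 ≤ 1 := by
          rw [div_le_one (by positivity)]
          calc min (c * matNorm Sg⁻¹ (Pi.single j (1:ℝ))) H ≤ H := min_le_right _ _
            _ ≤ H ^ 2 := by nlinarith
        have h2 : 0 ≤ min (c * matNorm Sg⁻¹ (Pi.single j (1:ℝ))) H / H ^ 2 :=
          div_nonneg h0 (by positivity)
        have h3 := coord_le_l2norm θ j
        rw [abs_le] at h3 ⊢
        have hs0 := Real.sqrt_nonneg (d:ℝ)
        exact ⟨by linarith [h3.1], by linarith [h3.2]⟩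
      have hψmem : (fun j => q (min (c * matNorm Sg⁻¹ (Pi.single j (1:ℝ))) H / H ^ 2 + θ j))
          ∈ Gd := by
        rw [hGddef, Fintype.mem_piFinset]
        intro j
        exact hqmem _ (hψB j)
      refine ⟨_, hmem4 (Or.inr (Or.inr (Or.inr (Finset.mem_image.mpr
        ⟨(pol, φ, fun j => q (min (c * matNorm Sg⁻¹ (Pi.single j (1:ℝ))) H / H ^ 2 + θ j)),
         Finset.mem_product.mpr ⟨hpol, Finset.mem_product.mpr ⟨hφ, hψmem⟩⟩, rfl⟩)))), ?_⟩
      intro s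
      refine weighted_abs_le (hPol pol hpol s).1 (hPol pol hpol s).2 ?_
      intro a
      obtain ⟨j₀, hj₀⟩ := hΦ'one φ hφ (s, a)
      show |(min (c * matNorm Sg⁻¹ (φ (s, a))) H / H ^ 2 + ∑ j, φ (s, a) j * θ j) -
        (∑ j, φ (s, a) j * q (min (c * matNorm Sg⁻¹ (Pi.single j (1:ℝ))) H / H ^ 2 + θ j))| ≤ γ
      rw [single_dot hj₀
          (fun j => q (min (c * matNorm Sg⁻¹ (Pi.single j (1:ℝ))) H / H ^ 2 + θ j)),
        single_dot hj₀ θ, hj₀]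
      have := hqerr (min (c * matNorm Sg⁻¹ (Pi.single j₀ (1:ℝ))) H / H ^ 2 + θ j₀)
      linarith
end

section
/- Let d, N ≥ 1 be integers and λ₀ ≥ 1 a real. Let G_1,…,G_N be symmetric positive semidefinite d×d real matrices each of whose eigenvalues is at most 1 (equivalently, G_n ≼ I_d), and define M_0 := λ₀·I_d and M_n := M_{n−1} + G_n for n = 1,…,N (each M_n is positive definite, hence invertible). Then Σ_{n=1}^{N} Tr( G_n · M_{n−1}^{-1} ) ≤ 2·log det(M_N) − 2·log det(λ₀·I_d). -/
/-!
Write `A = S²` with `S = A^{1/2}`. Conjugating by `S⁻¹` turns one step into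
`tr C ≤ 2 log det (1 + C)` for `C = S⁻¹ G S⁻¹`, and `G ≼ A` gives `0 ≼ C ≼ 1`. On the eigenvalues
`c ∈ [0, 1]` of `C` this is `c ≤ 2 log (1 + c)`, which holds because
`c / 2 ≤ c / (1 + c) ≤ log (1 + c)`. Since `1 ≼ λ₀ I ≼ M_{n-1}`, every `G_n ≼ I ≼ M_{n-1}`, and the
per-step bounds telescope.
-/

open Finset Matrix

open scoped MatrixOrder

lemma le_two_mul_log_one_add {x : ℝ} (h0 : 0 ≤ x) (h1 : x ≤ 1) :
    x ≤ 2 * Real.log (1 + x) := by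
  have hx : 0 < 1 + x := by linarith
  have hlog : x / (1 + x) ≤ Real.log (1 + x) := by
    have h := Real.one_sub_inv_le_log_of_pos hx
    rwa [show 1 - (1 + x)⁻¹ = x / (1 + x) by field_simp; ring] at h
  rw [div_le_iff₀ hx] at hlog
  nlinarith [Real.log_nonneg (by linarith : (1 : ℝ) ≤ 1 + x)]

lemma Fin.sum_univ_succ_sub_castSucc {M : Type*} [AddCommGroup M] {N : ℕ}
    (f : Fin (N + 1) → M) :
    ∑ k : Fin N, (f k.succ - f k.castSucc) = f (Fin.last N) - f 0 := by
  rw [sum_sub_distrib, sub_eq_sub_iff_add_eq_add, add_comm, ← Fin.sum_univ_succ,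
    Fin.sum_univ_castSucc, add_comm]

namespace Matrix

variable {n : Type*} [DecidableEq n]

lemma PosDef.of_one_le {A : Matrix n n ℝ} (hA : 1 ≤ A) : A.PosDef := by
  simpa using PosDef.one.add_posSemidef (le_iff.1 hA)

variable [Fintype n]

lemma IsHermitian.det_one_add {C : Matrix n n ℝ} (hC : C.IsHermitian) :
    (1 + C).det = ∏ i, (1 + hC.eigenvalues i) := by
  have h1C : (1 + C : Matrix n n ℝ) = cfc (fun x : ℝ ↦ 1 + x) C := by
    rw [cfc_add .., cfc_const_one .., cfc_id' ..]
  rw [h1C, hC.cfc_eq]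
  simp [IsHermitian.cfc, -Unitary.conjStarAlgAut_apply]

lemma trace_le_two_mul_log_det_one_add {C : Matrix n n ℝ} (hC : 0 ≤ C) (hC1 : C ≤ 1) :
    C.trace ≤ 2 * Real.log (1 + C).det := by
  have hH : C.IsHermitian := (nonneg_iff_posSemidef.1 hC).isHermitian
  have heig_nonneg : ∀ i, 0 ≤ hH.eigenvalues i := (nonneg_iff_posSemidef.1 hC).eigenvalues_nonneg
  have heig_le_one : ∀ i, hH.eigenvalues i ≤ 1 := fun i ↦
    (CFC.le_one_iff C hH).1 hC1 _ (hH.eigenvalues_mem_spectrum_real i)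
  rw [hH.trace_eq_sum_eigenvalues, hH.det_one_add,
    Real.log_prod fun i _ ↦ by linarith [heig_nonneg i], mul_sum]
  exact sum_le_sum fun i _ ↦ le_two_mul_log_one_add (heig_nonneg i) (heig_le_one i)

lemma trace_mul_inv_le_two_mul_log_det_add_sub {A G : Matrix n n ℝ} (hA : A.PosDef)
    (hG : 0 ≤ G) (hGA : G ≤ A) :
    (G * A⁻¹).trace ≤ 2 * Real.log (A + G).det - 2 * Real.log A.det := by
  set S := CFC.sqrt A
  have hSS : S * S = A := CFC.sqrt_mul_sqrt_self A hA.posSemidef.nonneg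
  have hS : star S = S := (CFC.sqrt_nonneg A).isSelfAdjoint
  have hSdet : IsUnit S.det := by
    have h : IsUnit (S.det * S.det) := by rw [← det_mul, hSS]; exact hA.det_pos.ne'.isUnit
    exact isUnit_of_mul_isUnit_left h
  have hSinv : star S⁻¹ = S⁻¹ := by
    rw [star_eq_conjTranspose, conjTranspose_nonsing_inv, ← star_eq_conjTranspose, hS]
  set C := S⁻¹ * G * S⁻¹
  have hC0 : 0 ≤ C := by
    simpa [hSinv] using star_left_conjugate_le_conjugate hG S⁻¹
  have hC1 : C ≤ 1 := by
    have h := star_left_conjugate_le_conjugate hGA S⁻¹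
    rwa [hSinv, ← hSS, ← mul_assoc, nonsing_inv_mul _ hSdet, one_mul, mul_nonsing_inv _ hSdet] at h
  have htrace : (G * A⁻¹).trace = C.trace := by
    rw [← hSS, Matrix.mul_inv_rev, ← mul_assoc, trace_mul_cycle]
  have hdet : (A + G).det = A.det * (1 + C).det := by
    have hfactor : A + G = S * (1 + C) * S := by
      simp only [C, mul_add, add_mul, mul_one, hSS, ← mul_assoc, mul_nonsing_inv _ hSdet, one_mul]
      rw [mul_assoc, nonsing_inv_mul _ hSdet, mul_one]
    rw [hfactor, det_mul, det_mul, ← hSS, det_mul]; ring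
  have hdet_pos : 0 < (1 + C).det :=
    (PosDef.one.add_posSemidef (nonneg_iff_posSemidef.1 hC0)).det_pos
  rw [hdet, Real.log_mul hA.det_pos.ne' hdet_pos.ne', htrace]
  linarith [trace_le_two_mul_log_det_one_add hC0 hC1]

end Matrix

theorem elliptical_potential_reduction_general
    {d N : ℕ}
    {lam0 : ℝ} (hlam0 : 1 ≤ lam0)
    (G : Fin N → Matrix (Fin d) (Fin d) ℝ)
    (hpsd : ∀ k, (G k).PosSemidef)
    (hle : ∀ k, ((1 : Matrix (Fin d) (Fin d) ℝ) - G k).PosSemidef)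
    (Mm : Fin (N + 1) → Matrix (Fin d) (Fin d) ℝ)
    (hM0 : Mm 0 = lam0 • (1 : Matrix (Fin d) (Fin d) ℝ))
    (hMrec : ∀ k : Fin N, Mm k.succ = Mm k.castSucc + G k) :
    (∑ k : Fin N, (G k * (Mm k.castSucc)⁻¹).trace) ≤
      2 * Real.log (Mm (Fin.last N)).det -
        2 * Real.log (lam0 • (1 : Matrix (Fin d) (Fin d) ℝ)).det := by
  have hone_le : ∀ k, 1 ≤ Mm k := by
    intro k
    induction k using Fin.induction with
    | zero =>
      have h : ((lam0 - 1) • (1 : Matrix (Fin d) (Fin d) ℝ)).PosSemidef :=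
        PosSemidef.one.smul (sub_nonneg.2 hlam0)
      rwa [sub_smul, one_smul, ← le_iff, ← hM0] at h
    | succ k ih => exact hMrec k ▸ ih.trans (le_add_of_nonneg_right (hpsd k).nonneg)
  calc (∑ k : Fin N, (G k * (Mm k.castSucc)⁻¹).trace)
      ≤ ∑ k : Fin N, (2 * Real.log (Mm k.succ).det - 2 * Real.log (Mm k.castSucc).det) :=
        sum_le_sum fun k _ ↦ hMrec k ▸ trace_mul_inv_le_two_mul_log_det_add_sub
          (.of_one_le (hone_le _)) (hpsd k).nonneg ((le_iff.2 (hle k)).trans (hone_le _))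
    _ = _ := by rw [Fin.sum_univ_succ_sub_castSucc fun k ↦ 2 * Real.log (Mm k).det, hM0]

/-- Matrix elliptical-potential inequality (Lemma `reduction`). -/
theorem elliptical_potential_reduction
    {d N : ℕ} (hd : 1 ≤ d) (hN : 1 ≤ N)
    {lam0 : ℝ} (hlam0 : 1 ≤ lam0)
    (G : Fin N → Matrix (Fin d) (Fin d) ℝ)
    (hpsd : ∀ k, (G k).PosSemidef)
    (hle : ∀ k, ((1 : Matrix (Fin d) (Fin d) ℝ) - G k).PosSemidef)
    (Mm : Fin (N + 1) → Matrix (Fin d) (Fin d) ℝ)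
    (hM0 : Mm 0 = lam0 • (1 : Matrix (Fin d) (Fin d) ℝ))
    (hMrec : ∀ k : Fin N, Mm k.succ = Mm k.castSucc + G k) :
    (∑ k : Fin N, (G k * (Mm k.castSucc)⁻¹).trace) ≤
      2 * Real.log (Mm (Fin.last N)).det -
        2 * Real.log (lam0 • (1 : Matrix (Fin d) (Fin d) ℝ)).det :=
  elliptical_potential_reduction_general hlam0 G hpsd hle Mm hM0 hMrec
end
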